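/- arXiv:2510.24906 — 2 statements merged into one kernel-verified Lean document; each statement's English description precedes it below -/
import Mathlib

section
/- Let (N,v) be a convex integer coalitional game with SV_i(N,v) ∈ [0,1) for every i ∈ N, and let π be a linear order on N such that SV values are nonincreasing along π. Let C be the set of vectors in {0,1}^N that belong to the core of (N,v), and suppose x* ∈ C is lexicographically maximal in C with respect to π (i.e., there is no y ∈ C such that at the first position of π where x* and y differ, y has value 1 and x* has value 0). Then for every real p ≥ 1 and every y ∈ C it holds that (Σ_{i∈N} |SV_i(N,v) − x*_i|^p)^{1/p} ≤ (Σ_{i∈N} |SV_i(N,v) − y_i|^p)^{1/p}. -/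
open Finset

/-- A game is convex if marginal contributions increase with coalition size. -/
def IsConvex {α : Type*} [DecidableEq α] (v : Finset α → ℝ) : Prop :=
  ∀ (i : α) (S T : Finset α), S ⊆ T → i ∉ T →
    v (insert i S) - v S ≤ v (insert i T) - v T

/-- An integer game: every coalition value is an integer. -/
def IsIntegerGame {α : Type*} (v : Finset α → ℝ) : Prop :=
  ∀ S : Finset α, ∃ z : ℤ, v S = (z : ℝ)

/-- A size-bounded game: `v S < |S|` for every nonempty coalition. -/
def IsSizeBounded {α : Type*} (v : Finset α → ℝ) : Prop :=
  ∀ S : Finset α, S.Nonempty → v S < (S.card : ℝ)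

/-- A payoff vector belongs to the core. -/
def InCore {α : Type*} [Fintype α] [DecidableEq α] (v : Finset α → ℝ) (x : α → ℝ) : Prop :=
  (∑ i, x i) = v Finset.univ ∧ ∀ S : Finset α, v S ≤ ∑ i ∈ S, x i

/-- The set of players preceding `i` in the ordering `σ`. -/
def preSet {α : Type*} [Fintype α] [DecidableEq α]
    (σ : α ≃ Fin (Fintype.card α)) (i : α) : Finset α :=
  Finset.univ.filter (fun j => σ j < σ i)

/-- The Shapley value of player `i`: average marginal contribution over all orderings. -/
noncomputable def SV {α : Type*} [Fintype α] [DecidableEq α]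
    (v : Finset α → ℝ) (i : α) : ℝ :=
  (∑ σ : α ≃ Fin (Fintype.card α), (v (insert i (preSet σ i)) - v (preSet σ i))) /
    (Nat.factorial (Fintype.card α) : ℝ)

/-- The Harsanyi dividend of a coalition. -/
noncomputable def dividend {α : Type*} [DecidableEq α] (v : Finset α → ℝ) (S : Finset α) : ℝ :=
  ∑ T ∈ S.powerset, (-1 : ℝ) ^ (S.card - T.card) * v T

/-- A positive game: all Harsanyi dividends are nonnegative. -/
def IsPositive {α : Type*} [DecidableEq α] (v : Finset α → ℝ) : Prop :=
  ∀ S : Finset α, 0 ≤ dividend v S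

/-- The `c`-reduced game on player set `N \ {i}`. -/
noncomputable def reducedGame {α : Type*} [Fintype α] [DecidableEq α]
    (v : Finset α → ℝ) (i : α) (c : ℝ) : Finset {j : α // j ≠ i} → ℝ :=
  fun S =>
    if S = Finset.univ then v Finset.univ - c
    else if S = ∅ then 0
    else max (v (insert i (S.image Subtype.val)) - c) (v (S.image Subtype.val))

/-!
Since `SV_k ∈ [0, 1)`, swapping a `1` at position `j` of a binary vector for a `1` at an earlier
position `i` (so `SV_j ≤ SV_i`) cannot increase `∑ |SV_k - y_k| ^ p`. The binary core points of a
convex integer game have a basis-exchange property: if `x_i = 0` and `y_i = 1`, then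
`x + e_i - e_j` is again a binary core point for some `j` with `x_j = 1`, `y_j = 0`; one takes `j`
outside the largest `x`-tight coalition avoiding `i`. Convexity makes tight coalitions closed
under union, and integrality gives every other coalition containing `j` slack at least `1`.
At the first position where `x*` and a binary core point `y` differ, lexicographic maximality
forces `x* = 1`, `y = 0`; exchanging there in `y` lowers both its cost and the number of
disagreements with `x*`, so induction on that number proves the claim.
-/

section Convex

variable {α : Type*} [DecidableEq α] {v : Finset α → ℝ}

theorem IsConvex.marginal_union_mono (hv : IsConvex v) (D : Finset α) {S T : Finset α}
    (hST : S ⊆ T) (hDT : Disjoint D T) : v (S ∪ D) - v S ≤ v (T ∪ D) - v T := by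
  induction D using Finset.induction_on with
  | empty => simp
  | @insert a D ha ih =>
    rw [disjoint_insert_left] at hDT
    have hstep := hv a (S ∪ D) (T ∪ D) (union_subset_union hST le_rfl) (by simp [hDT.1, ha])
    rw [union_insert, union_insert]
    linarith [ih hDT.2]

theorem IsConvex.supermodular (hv : IsConvex v) (S T : Finset α) :
    v S + v T ≤ v (S ∪ T) + v (S ∩ T) := by
  have h := hv.marginal_union_mono (S \ T) (S := S ∩ T) inter_subset_right sdiff_disjoint
  rw [union_comm, sdiff_union_inter, union_sdiff_self_eq_union, union_comm] at h
  linarith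

end Convex

theorem sum_add_single_sub_single {α : Type*} [DecidableEq α] (x : α → ℝ) (i j : α)
    (S : Finset α) :
    ∑ k ∈ S, (x + Pi.single i 1 - Pi.single j 1 : α → ℝ) k =
      ∑ k ∈ S, x k + (if i ∈ S then 1 else 0) - (if j ∈ S then 1 else 0) := by
  simp only [Pi.add_apply, Pi.sub_apply, sum_sub_distrib, sum_add_distrib, sum_pi_single']

section Core

variable {α : Type*} [Fintype α] [DecidableEq α] {v : Finset α → ℝ} {x : α → ℝ}

def IsTight (v : Finset α → ℝ) (x : α → ℝ) (S : Finset α) : Prop :=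
  ∑ k ∈ S, x k = v S

theorem IsTight.union (hv : IsConvex v) (hx : InCore v x) {S T : Finset α}
    (hS : IsTight v x S) (hT : IsTight v x T) : IsTight v x (S ∪ T) := by
  have := sum_union_inter (s₁ := S) (s₂ := T) (f := x)
  have := hv.supermodular S T
  have := hx.2 (S ∪ T)
  have := hx.2 (S ∩ T)
  unfold IsTight at *
  linarith

theorem InCore.exists_maximal_tight_not_mem (hv0 : v ∅ = 0) (hv : IsConvex v)
    (hx : InCore v x) (i : α) :
    ∃ U, i ∉ U ∧ IsTight v x U ∧ ∀ S, i ∉ S → IsTight v x S → S ⊆ U := by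
  classical
  let F := univ.filter fun S : Finset α => i ∉ S ∧ IsTight v x S
  have hF : i ∉ F.sup id ∧ IsTight v x (F.sup id) :=
    sup_induction (p := fun U => i ∉ U ∧ IsTight v x U) ⟨by simp, by simp [IsTight, hv0]⟩
      (fun S hS T hT => ⟨by simp [hS.1, hT.1], hS.2.union hv hx hT.2⟩) (by simp [F])
  exact ⟨F.sup id, hF.1, hF.2, fun S hiS hS => le_sup (f := id) (by simp [F, hiS, hS])⟩

theorem InCore.add_one_le_sum_of_not_isTight (hint : IsIntegerGame v)
    (hx01 : ∀ k, x k = 0 ∨ x k = 1) (hx : InCore v x) {S : Finset α}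
    (hS : ¬ IsTight v x S) : v S + 1 ≤ ∑ k ∈ S, x k := by
  obtain ⟨a, ha⟩ := hint S
  have hsum : ∑ k ∈ S, x k = ((∑ k ∈ S, if x k = 1 then 1 else 0 : ℤ) : ℝ) := by
    push_cast
    exact sum_congr rfl fun k _ => by rcases hx01 k with h | h <;> simp [h]
  have hlt : v S < ∑ k ∈ S, x k := (hx.2 S).lt_of_ne (Ne.symm hS)
  rw [ha, hsum] at hlt ⊢
  exact_mod_cast hlt

theorem InCore.exists_exchange (hv0 : v ∅ = 0) (hv : IsConvex v) (hint : IsIntegerGame v)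
    {y : α → ℝ} (hx01 : ∀ k, x k = 0 ∨ x k = 1) (hy01 : ∀ k, y k = 0 ∨ y k = 1)
    (hx : InCore v x) (hy : InCore v y) {i : α} (hxi : x i = 0) (hyi : y i = 1) :
    ∃ j, x j = 1 ∧ y j = 0 ∧ InCore v (x + Pi.single i 1 - Pi.single j 1) := by
  obtain ⟨U, hiU, hU, hUmax⟩ := hx.exists_maximal_tight_not_mem hv0 hv i
  have hiUc : i ∈ Uᶜ := by simpa using hiU
  have hcompl : ∑ k ∈ Uᶜ, y k ≤ ∑ k ∈ Uᶜ, x k := by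
    have := hy.2 U
    have := sum_add_sum_compl U x
    have := sum_add_sum_compl U y
    unfold IsTight at hU
    linarith [hx.1, hy.1]
  have hlt : ∑ k ∈ Uᶜ.erase i, y k < ∑ k ∈ Uᶜ.erase i, x k := by
    rw [← add_sum_erase _ _ hiUc, ← add_sum_erase _ _ hiUc] at hcompl
    linarith
  obtain ⟨j, hj, hyx⟩ := exists_lt_of_sum_lt hlt
  have hjU : j ∉ U := by simpa using mem_of_mem_erase hj
  have hxj : x j = 1 := by rcases hx01 j with h | h <;> rcases hy01 j with h' | h' <;> linarith
  have hyj : y j = 0 := by rcases hy01 j with h | h <;> linarith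
  refine ⟨j, hxj, hyj, ?_, fun S => ?_⟩
  · rw [sum_add_single_sub_single]
    simp [hx.1]
  rw [sum_add_single_sub_single]
  by_cases hjS : j ∈ S
  · by_cases hiS : i ∈ S
    · simp [hiS, hjS, hx.2 S]
    · have := hx.add_one_le_sum_of_not_isTight hint hx01 fun hS => hjU (hUmax S hiS hS hjS)
      simp only [hiS, hjS, if_true, if_false]
      linarith
  · have := hx.2 S
    split_ifs <;> linarith

end Core

section Exchange

variable {α : Type*} [DecidableEq α]

def HasExchange (B : Set (α → ℝ)) : Prop :=
  ∀ x ∈ B, ∀ y ∈ B, ∀ i, x i = 0 → y i = 1 →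
    ∃ j, x j = 1 ∧ y j = 0 ∧ x + Pi.single i 1 - Pi.single j 1 ∈ B

theorem HasExchange.eq_one_of_first_diff {β : Type*} [LinearOrder β] {B : Set (α → ℝ)}
    {ord : α → β} {xs : α → ℝ} (hB : HasExchange B)
    (hB01 : ∀ y ∈ B, ∀ k, y k = 0 ∨ y k = 1) (hxs : xs ∈ B)
    (hlex : ¬ ∃ y ∈ B, ∃ i, (∀ j, ord j < ord i → xs j = y j) ∧ xs i = 0 ∧ y i = 1)
    {y : α → ℝ} (hy : y ∈ B) {i : α} (hfirst : ∀ k, ord k < ord i → xs k = y k)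
    (hi : xs i ≠ y i) : xs i = 1 ∧ y i = 0 := by
  rcases hB01 xs hxs i with hxi | hxi
  · have hyi : y i = 1 := (hB01 y hy i).resolve_left (hxi ▸ hi).symm
    obtain ⟨j, hxj, hyj, hz⟩ := hB xs hxs y hy i hxi hyi
    have hij : i ≠ j := by rintro rfl; linarith
    refine absurd ⟨_, hz, i, fun k hk => ?_, hxi, by simp [hij, hxi]⟩ hlex
    have hki : k ≠ i := by rintro rfl; exact lt_irrefl _ hk
    have hkj : k ≠ j := by rintro rfl; linarith [hfirst k hk]
    simp [hki, hkj]
  · exact ⟨hxi, (hB01 y hy i).resolve_right (hxi ▸ hi).symm⟩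

variable [Fintype α]

theorem hasExchange_binary_core {v : Finset α → ℝ} (hv0 : v ∅ = 0) (hv : IsConvex v)
    (hint : IsIntegerGame v) :
    HasExchange {x | (∀ k, x k = 0 ∨ x k = 1) ∧ InCore v x} := by
  rintro x ⟨hx01, hx⟩ y ⟨hy01, hy⟩ i hxi hyi
  obtain ⟨j, hxj, hyj, hcore⟩ := hx.exists_exchange hv0 hv hint hx01 hy01 hy hxi hyi
  have hij : i ≠ j := by rintro rfl; linarith
  refine ⟨j, hxj, hyj, fun k => ?_, hcore⟩
  by_cases hki : k = i
  · simp [hki, hij, hxi]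
  by_cases hkj : k = j
  · simp [hkj, Ne.symm hij, hxj]
  simpa [hki, hkj] using hx01 k

theorem sum_rpow_abs_sub_add_single_sub_single_le {s y : α → ℝ} {p : ℝ} {i j : α}
    (hp : 0 ≤ p) (hj0 : 0 ≤ s j) (hji : s j ≤ s i) (hi1 : s i ≤ 1) (hyi : y i = 0)
    (hyj : y j = 1) :
    ∑ k, |s k - (y + Pi.single i 1 - Pi.single j 1 : α → ℝ) k| ^ p ≤ ∑ k, |s k - y k| ^ p := by
  have hij : i ≠ j := by rintro rfl; linarith
  rw [← sub_nonpos, ← sum_sub_distrib,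
    Fintype.sum_eq_add i j hij fun k ⟨hki, hkj⟩ => by simp [hki, hkj]]
  simp only [Pi.add_apply, Pi.sub_apply, Pi.single_eq_same, Pi.single_eq_of_ne hij,
    Pi.single_eq_of_ne hij.symm, hyi, hyj, zero_add, add_zero, sub_zero, sub_self]
  rw [abs_of_nonpos (by linarith : s i - 1 ≤ 0), abs_of_nonneg (by linarith : 0 ≤ s i),
    abs_of_nonneg hj0, abs_of_nonpos (by linarith : s j - 1 ≤ 0), neg_sub, neg_sub]
  have := Real.rpow_le_rpow (by linarith) (by linarith : 1 - s i ≤ 1 - s j) hp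
  have := Real.rpow_le_rpow hj0 hji hp
  linarith

theorem HasExchange.sum_rpow_abs_sub_le_of_lexMax {β : Type*} [LinearOrder β]
    {B : Set (α → ℝ)} {ord : α → β} {xs : α → ℝ} (hB : HasExchange B)
    (hB01 : ∀ y ∈ B, ∀ k, y k = 0 ∨ y k = 1) (hord : Function.Injective ord) {s : α → ℝ}
    (hs0 : ∀ k, 0 ≤ s k) (hs1 : ∀ k, s k ≤ 1) (hs : ∀ i j, ord i < ord j → s j ≤ s i)
    {p : ℝ} (hp : 0 ≤ p) (hxs : xs ∈ B)
    (hlex : ¬ ∃ y ∈ B, ∃ i, (∀ j, ord j < ord i → xs j = y j) ∧ xs i = 0 ∧ y i = 1)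
    {y : α → ℝ} (hy : y ∈ B) : ∑ k, |s k - xs k| ^ p ≤ ∑ k, |s k - y k| ^ p := by
  induction hn : (univ.filter fun k => xs k ≠ y k).card using Nat.strong_induction_on
    generalizing y with
  | _ n ih =>
  set D := univ.filter fun k => xs k ≠ y k
  rcases D.eq_empty_or_nonempty with hD | hD
  · obtain rfl : xs = y := funext (by simpa [D] using hD)
    rfl
  obtain ⟨i, hiD, hmin⟩ := exists_min_image D ord hD
  have hfirst : ∀ k, ord k < ord i → xs k = y k :=
    fun k hk => by_contra fun h => (hmin k (by simp [D, h])).not_gt hk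
  obtain ⟨hxi, hyi⟩ := hB.eq_one_of_first_diff hB01 hxs hlex hy hfirst (mem_filter.mp hiD).2
  obtain ⟨j, hyj, hxj, hy'⟩ := hB y hy xs hxs i hyi hxi
  have hji : j ≠ i := by rintro rfl; linarith
  have hij : ord i < ord j :=
    lt_of_le_of_ne (not_lt.mp fun h => by linarith [hfirst j h]) (hord.ne hji.symm)
  have hD' : (univ.filter fun k => xs k ≠ (y + Pi.single i 1 - Pi.single j 1 : α → ℝ) k) ⊆
      D.erase i := by
    intro k
    by_cases hki : k = i
    · simp [hki, hji.symm, hxi, hyi]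
    by_cases hkj : k = j
    · simp [hkj, hji, hxj, hyj]
    simp [D, hki, hkj]
  calc ∑ k, |s k - xs k| ^ p
      ≤ ∑ k, |s k - (y + Pi.single i 1 - Pi.single j 1 : α → ℝ) k| ^ p :=
        ih _ (hn ▸ (card_le_card hD').trans_lt (card_erase_lt_of_mem hiD)) hy' rfl
    _ ≤ ∑ k, |s k - y k| ^ p :=
        sum_rpow_abs_sub_add_single_sub_single_le hp (hs0 j) (hs i j hij) (hs1 i) hyi hyj

end Exchange

theorem stmt5_general {N : Type*} [Fintype N] [DecidableEq N]
    (v : Finset N → ℝ) (hv0 : v ∅ = 0)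
    (hconv : IsConvex v) (hint : IsIntegerGame v)
    (hSV : ∀ i : N, 0 ≤ SV v i ∧ SV v i < 1)
    (ord : N ≃ Fin (Fintype.card N))
    (hmono : ∀ i j : N, ord i ≤ ord j → SV v j ≤ SV v i)
    (xs : N → ℝ) (hxs01 : ∀ i, xs i = 0 ∨ xs i = 1) (hxscore : InCore v xs)
    (hlexmax : ¬ ∃ y : N → ℝ, (∀ i, y i = 0 ∨ y i = 1) ∧ InCore v y ∧
        ∃ i : N, (∀ j : N, ord j < ord i → xs j = y j) ∧ xs i = 0 ∧ y i = 1) :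
    ∀ p : ℝ, 1 ≤ p → ∀ y : N → ℝ, (∀ i, y i = 0 ∨ y i = 1) → InCore v y →
      (∑ i, |SV v i - xs i| ^ p) ^ (1 / p) ≤ (∑ i, |SV v i - y i| ^ p) ^ (1 / p) := by
  intro p hp y hy01 hy
  have hsum := (hasExchange_binary_core hv0 hconv hint).sum_rpow_abs_sub_le_of_lexMax
    (fun _ hz => hz.1) ord.injective (fun k => (hSV k).1) (fun k => (hSV k).2.le)
    (fun i j hij => hmono i j hij.le) (by linarith) ⟨hxs01, hxscore⟩
    (fun ⟨z, ⟨hz01, hz⟩, hlex⟩ => hlexmax ⟨z, hz01, hz, hlex⟩) ⟨hy01, hy⟩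
  exact Real.rpow_le_rpow (sum_nonneg fun k _ => by positivity) hsum
    (one_div_nonneg.mpr (by linarith))

theorem stmt5 {N : Type*} [Fintype N] [DecidableEq N] [Nonempty N]
    (v : Finset N → ℝ) (hv0 : v ∅ = 0)
    (hconv : IsConvex v) (hint : IsIntegerGame v)
    (hSV : ∀ i : N, 0 ≤ SV v i ∧ SV v i < 1)
    (ord : N ≃ Fin (Fintype.card N))
    (hmono : ∀ i j : N, ord i ≤ ord j → SV v j ≤ SV v i)
    (xs : N → ℝ) (hxs01 : ∀ i, xs i = 0 ∨ xs i = 1) (hxscore : InCore v xs)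
    (hlexmax : ¬ ∃ y : N → ℝ, (∀ i, y i = 0 ∨ y i = 1) ∧ InCore v y ∧
        ∃ i : N, (∀ j : N, ord j < ord i → xs j = y j) ∧ xs i = 0 ∧ y i = 1) :
    ∀ p : ℝ, 1 ≤ p → ∀ y : N → ℝ, (∀ i, y i = 0 ∨ y i = 1) → InCore v y →
      (∑ i, |SV v i - xs i| ^ p) ^ (1 / p) ≤ (∑ i, |SV v i - y i| ^ p) ^ (1 / p) :=
  stmt5_general v hv0 hconv hint hSV ord hmono xs hxs01 hxscore hlexmax
end

section
/- Every positive coalitional game is convex: if (N,v) satisfies Δ_v(S) ≥ 0 for every S ⊆ N, then v(S ∪ {i}) − v(S) ≤ v(T ∪ {i}) − v(T) for every player i ∈ N and all coalitions S ⊆ T ⊆ N∖{i}. -/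
open Finset

/-
The marginal contribution of `i` to `S` is the sum of the dividends of the coalitions
`insert i U` with `U ⊆ S`. Enlarging `S` to `T` only adds further terms, all nonnegative
in a positive game.
-/

lemma dividend_insert {α : Type*} [DecidableEq α] (v : Finset α → ℝ) {i : α} {T : Finset α}
    (hi : i ∉ T) :
    dividend v (insert i T) = dividend (fun U => v (insert i U)) T - dividend v T := by
  unfold dividend
  rw [sum_powerset_insert hi, card_insert_of_notMem hi]
  have h_without_i : ∀ U ∈ T.powerset,
      (-1 : ℝ) ^ (#T + 1 - #U) * v U = -((-1 : ℝ) ^ (#T - #U) * v U) := by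
    intro U hU
    rw [Nat.succ_sub (card_le_card (mem_powerset.1 hU)), pow_succ]
    ring
  have h_with_i : ∀ U ∈ T.powerset,
      (-1 : ℝ) ^ (#T + 1 - #(insert i U)) * v (insert i U)
        = (-1 : ℝ) ^ (#T - #U) * v (insert i U) := by
    intro U hU
    rw [card_insert_of_notMem fun h => hi (mem_powerset.1 hU h), Nat.add_sub_add_right]
  rw [sum_congr rfl h_without_i, sum_congr rfl h_with_i, sum_neg_distrib]
  ring

lemma sum_powerset_dividend {α : Type*} [DecidableEq α] (v : Finset α → ℝ) (S : Finset α) :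
    ∑ T ∈ S.powerset, dividend v T = v S := by
  induction S using Finset.induction generalizing v with
  | empty => simp [dividend]
  | @insert i S hi ih =>
    rw [sum_powerset_insert hi, sum_congr rfl fun T hT =>
      dividend_insert v fun h => hi (mem_powerset.1 hT h), sum_sub_distrib, ih, ih]
    ring

lemma sub_eq_sum_powerset_dividend_insert {α : Type*} [DecidableEq α] (v : Finset α → ℝ)
    {i : α} {S : Finset α} (hi : i ∉ S) :
    v (insert i S) - v S = ∑ T ∈ S.powerset, dividend v (insert i T) := by
  rw [← sum_powerset_dividend v (insert i S), sum_powerset_insert hi, sum_powerset_dividend]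
  ring

theorem stmt19_general {N : Type*} [DecidableEq N]
    (v : Finset N → ℝ) (hpos : IsPositive v) :
    IsConvex v := by
  intro i S T hST hiT
  rw [sub_eq_sum_powerset_dividend_insert v fun h => hiT (hST h),
    sub_eq_sum_powerset_dividend_insert v hiT]
  exact sum_le_sum_of_subset_of_nonneg (powerset_mono.2 hST) fun U _ _ => hpos _

theorem stmt19 {N : Type*} [Fintype N] [DecidableEq N] [Nonempty N]
    (v : Finset N → ℝ) (hv0 : v ∅ = 0) (hpos : IsPositive v) :
    IsConvex v :=
  stmt19_general v hpos
end
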